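/- For all integers n ≥ 0 and k ≥ 1, the alternating degenerate power sum at odd arguments satisfies T_{k,λ}(2n+1) = −2^{k−1} · (n+1)_{k,λ/2} − ∑_{j=1}^{k−1} C(k,j) · (n+1)_{k−j,λ/2} · ∑_{i=1}^{j} (−1)^i · i! · 2^{k−j−i−1} · S_{2,λ}(j,i). -/

import Mathlib

open Finset

noncomputable section

/-- The generalized falling factorial `(x)_{n,λ} = x(x-λ)⋯(x-(n-1)λ)`. -/
def gff (lam x : ℝ) (n : ℕ) : ℝ := ∏ i ∈ Finset.range n, (x - i * lam)

/-- The ordinary falling factorial `(x)_r = x(x-1)⋯(x-r+1)` of a real number. -/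
def ff (x : ℝ) (r : ℕ) : ℝ := ∏ i ∈ Finset.range r, (x - i)

/-- The degenerate exponential `e_λ^x(t) = ∑_{n≥0} (x)_{n,λ} t^n/n!` as a formal power series. -/
def degExp (lam x : ℝ) : PowerSeries ℝ :=
  PowerSeries.mk fun n => gff lam x n / n.factorial

/-- `egfCoeff f n = a_n` when `f = ∑_{n≥0} a_n t^n/n!`. -/
def egfCoeff (f : PowerSeries ℝ) (n : ℕ) : ℝ := n.factorial * PowerSeries.coeff (R := ℝ) n f

/-- The formal binomial power `(1+g)^a = ∑_{k≥0} (a)_k/k! · g^k`,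
intended for `g` with zero constant term (so the sum is coefficientwise finite). -/
def binomPow (a : ℝ) (g : PowerSeries ℝ) : PowerSeries ℝ :=
  PowerSeries.mk fun n =>
    ∑ k ∈ Finset.range (n + 1), (ff a k / k.factorial) * PowerSeries.coeff (R := ℝ) n (g ^ k)

/-- `(2/(e_λ(t)+1))^α`, the `(-α)`-th formal binomial power of `(e_λ(t)+1)/2 = 1 + (e_λ(t)-1)/2`. -/
def eulerGF (lam a : ℝ) : PowerSeries ℝ :=
  binomPow (-a) (PowerSeries.C (R := ℝ) (1 / 2) * (degExp lam 1 - 1))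

/-- Generalized degenerate Euler-Genocchi polynomials `A^{(r)}_{n,λ}(x)`, defined by
`∑_{n≥0} A^{(r)}_{n,λ}(x) t^n/n! = 2 t^r e_λ^x(t)/(e_λ(t)+1)`. -/
def A (lam : ℝ) (r : ℕ) (x : ℝ) (n : ℕ) : ℝ :=
  egfCoeff (2 * PowerSeries.X ^ r * degExp lam x * (degExp lam 1 + 1)⁻¹) n

/-- Generalized degenerate Euler-Genocchi polynomials of order `α`, `A^{(r,α)}_{n,λ}(x)`,
defined by `∑_{n≥0} A^{(r,α)}_{n,λ}(x) t^n/n! = t^r (2/(e_λ(t)+1))^α e_λ^x(t)`. -/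
def Aa (lam a : ℝ) (r : ℕ) (x : ℝ) (n : ℕ) : ℝ :=
  egfCoeff (PowerSeries.X ^ r * eulerGF lam a * degExp lam x) n

/-- Degenerate Euler polynomials of order `α`:
`∑_{n≥0} E^{(α)}_{n,λ}(x) t^n/n! = (2/(e_λ(t)+1))^α e_λ^x(t)`. -/
def Epoly (lam a x : ℝ) (n : ℕ) : ℝ := egfCoeff (eulerGF lam a * degExp lam x) n

/-- Degenerate Euler polynomials `E_{n,λ}(x)`:
`∑_{n≥0} E_{n,λ}(x) t^n/n! = 2 e_λ^x(t)/(e_λ(t)+1)`. -/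
def E1 (lam x : ℝ) (n : ℕ) : ℝ :=
  egfCoeff (2 * degExp lam x * (degExp lam 1 + 1)⁻¹) n

/-- Degenerate Euler numbers `E_{n,λ}`: `∑_{n≥0} E_{n,λ} t^n/n! = 2/(e_λ(t)+1)`. -/
def Enum (lam : ℝ) (n : ℕ) : ℝ :=
  egfCoeff (2 * (degExp lam 1 + 1)⁻¹) n

/-- Degenerate Stirling numbers of the second kind:
`∑_{n≥k} S_{2,λ}(n,k) t^n/n! = (1/k!)(e_λ(t)-1)^k`. -/
def S2 (lam : ℝ) (n k : ℕ) : ℝ :=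
  egfCoeff (PowerSeries.C (R := ℝ) (1 / k.factorial) * (degExp lam 1 - 1) ^ k) n

/-- Alternating degenerate power sum `T_{k,λ}(n) = ∑_{i=0}^n (-1)^i (i)_{k,λ}`. -/
def T (lam : ℝ) (k n : ℕ) : ℝ := ∑ i ∈ Finset.range (n + 1), (-1 : ℝ) ^ i * gff lam i k

section Aux
open PowerSeries

lemma gff_zero (lam x : ℝ) : gff lam x 0 = 1 := by simp [gff]

lemma gff_succ (lam x : ℝ) (k : ℕ) : gff lam x (k+1) = gff lam x k * (x - k*lam) := by
  simp [gff, Finset.prod_range_succ]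

lemma gff_vandermonde (lam x y : ℝ) (k : ℕ) :
    gff lam (x+y) k = ∑ j ∈ range (k+1), (k.choose j : ℝ) * gff lam x j * gff lam y (k-j) := by
  induction k with
  | zero => simp [gff]
  | succ k ih =>
    rw [gff_succ, ih, Finset.sum_mul]
    have key : ∀ j ∈ range (k+1),
        (k.choose j : ℝ) * gff lam x j * gff lam y (k-j) * (x + y - k*lam)
        = (k.choose j : ℝ) * gff lam x (j+1) * gff lam y (k-j)
          + (k.choose j : ℝ) * gff lam x j * gff lam y (k-j+1) := by
      intro j hj
      rw [Finset.mem_range] at hj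
      rw [gff_succ, gff_succ]
      have hcast : ((k-j : ℕ) : ℝ) = (k : ℝ) - j := by
        rw [Nat.cast_sub (by omega)]
      rw [hcast]; ring
    rw [Finset.sum_congr rfl key, Finset.sum_add_distrib]
    -- name pieces
    set g : ℕ → ℝ := fun j => (k.choose j : ℝ) * gff lam x j * gff lam y (k+1-j) with hg
    have hSB : ∑ j ∈ range (k+1), (k.choose j : ℝ) * gff lam x j * gff lam y (k-j+1)
        = ∑ j ∈ range (k+1), g j := by
      refine Finset.sum_congr rfl fun j hj => ?_
      rw [Finset.mem_range] at hj
      have : k - j + 1 = k + 1 - j := by omega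
      rw [hg]; simp only []; rw [this]
    rw [hSB]
    -- RHS manipulation
    rw [Finset.sum_range_succ' (fun j => ((k+1).choose j : ℝ) * gff lam x j * gff lam y (k+1-j)) (k+1)]
    have hps : ∀ j ∈ range (k+1),
        (((k+1).choose (j+1) : ℕ) : ℝ) * gff lam x (j+1) * gff lam y (k+1-(j+1))
        = (k.choose j : ℝ) * gff lam x (j+1) * gff lam y (k-j) + g (j+1) := by
      intro j hj
      rw [Finset.mem_range] at hj
      have h1 : (k+1).choose (j+1) = k.choose j + k.choose (j+1) := Nat.choose_succ_succ' k j
      have h2 : k + 1 - (j+1) = k - j := by omega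
      have h3 : k + 1 - (j + 1) = k + 1 - (j+1) := rfl
      rw [h1, h2, Nat.cast_add, add_mul, add_mul, hg]
      simp only []
      congr 2
      rw [h2]
    rw [Finset.sum_congr rfl hps, Finset.sum_add_distrib]
    have hgsum : ∑ j ∈ range (k+1), g (j+1)
        = ∑ j ∈ range (k+1), g j + g (k+1) - g 0 := by
      have h4 : ∑ j ∈ range (k+2), g j = ∑ j ∈ range (k+1), g (j+1) + g 0 :=
        Finset.sum_range_succ' g (k+1)
      have h5 : ∑ j ∈ range (k+2), g j = ∑ j ∈ range (k+1), g j + g (k+1) :=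
        Finset.sum_range_succ g (k+1)
      linarith [h4, h5]
    rw [hgsum]
    have hgk1 : g (k+1) = 0 := by
      rw [hg]; simp [Nat.choose_succ_self]
    have hg0 : g 0 = gff lam y (k+1) := by
      rw [hg]; simp [gff_zero]
    rw [hgk1, hg0]
    simp [gff_zero]
    ring

lemma gff_two_mul (lam x : ℝ) (k : ℕ) : gff lam (2*x) k = 2^k * gff (lam/2) x k := by
  unfold gff
  have h : ∀ i ∈ range k, (2*x - (i:ℝ)*lam) = 2*(x - i*(lam/2)) := fun i _ => by ring
  rw [Finset.prod_congr rfl h, Finset.prod_mul_distrib, Finset.prod_const, Finset.card_range]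

lemma degExp_mul (lam x y : ℝ) : degExp lam x * degExp lam y = degExp lam (x+y) := by
  ext n
  rw [PowerSeries.coeff_mul, Finset.Nat.sum_antidiagonal_eq_sum_range_succ_mk]
  simp only [degExp, coeff_mk]
  rw [gff_vandermonde, Finset.sum_div]
  refine Finset.sum_congr rfl fun j hj => ?_
  rw [Finset.mem_range] at hj
  have hfac : (n.choose j : ℝ) * (j.factorial : ℝ) * ((n-j).factorial : ℝ) = (n.factorial : ℝ) := by
    exact_mod_cast congrArg (Nat.cast (R := ℝ)) (Nat.choose_mul_factorial_mul_factorial (by omega))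
  have h1 : (j.factorial : ℝ) ≠ 0 := Nat.cast_ne_zero.2 j.factorial_ne_zero
  have h2 : ((n-j).factorial : ℝ) ≠ 0 := Nat.cast_ne_zero.2 (n-j).factorial_ne_zero
  have h3 : (n.factorial : ℝ) ≠ 0 := Nat.cast_ne_zero.2 n.factorial_ne_zero
  rw [div_mul_div_comm, div_eq_div_iff (by positivity) h3, ← hfac]
  ring

lemma degExp_zero (lam : ℝ) : degExp lam 0 = 1 := by
  ext n
  cases n with
  | zero => simp [degExp, gff]
  | succ m =>
    rw [PowerSeries.coeff_one]
    simp only [degExp, coeff_mk, Nat.succ_ne_zero, if_false]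
    have : gff lam 0 (m+1) = 0 := by
      unfold gff
      apply Finset.prod_eq_zero (Finset.mem_range.2 (Nat.succ_pos m))
      simp
    rw [this]; simp

lemma constCoeff_degExp (lam x : ℝ) : PowerSeries.constantCoeff (R := ℝ) (degExp lam x) = 1 := by
  rw [← PowerSeries.coeff_zero_eq_constantCoeff_apply]
  simp [degExp, gff]

lemma telescope (lam : ℝ) (m : ℕ) :
    (1 + degExp lam 1) * ∑ i ∈ range (m+1), PowerSeries.C (R := ℝ) ((-1)^i) * degExp lam (i:ℝ)
      = 1 + PowerSeries.C (R := ℝ) ((-1)^m) * degExp lam ((m:ℝ)+1) := by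
  induction m with
  | zero => simp [degExp_zero]
  | succ m ih =>
    rw [Finset.sum_range_succ, mul_add, ih]
    have h1 : degExp lam 1 * degExp lam ((m:ℝ)+1) = degExp lam ((m:ℝ)+1+1) := by
      rw [degExp_mul]; ring_nf
    have h2 : ((m+1 : ℕ) : ℝ) = (m:ℝ)+1 := by push_cast; ring
    rw [h2]
    have h3 : ((-1:ℝ))^(m+1) = -(-1:ℝ)^m := by ring
    rw [h3, map_neg]
    linear_combination -(PowerSeries.C (R := ℝ) ((-1)^m)) * h1

lemma geom (lam : ℝ) (k : ℕ) :
    (1 + degExp lam 1) * ∑ i ∈ range (k+1), (PowerSeries.C (R := ℝ) (-(1/2)) * (degExp lam 1 - 1))^i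
      = 2 - 2 * (PowerSeries.C (R := ℝ) (-(1/2)) * (degExp lam 1 - 1))^(k+1) := by
  set z := PowerSeries.C (R := ℝ) (-(1/2)) * (degExp lam 1 - 1) with hz
  have h4 : (2:PowerSeries ℝ) * PowerSeries.C (R := ℝ) (-(1/2)) = -1 := by
    rw [(map_ofNat (PowerSeries.C (R := ℝ)) 2).symm, ← map_mul]
    norm_num
  have he : (1 : PowerSeries ℝ) + degExp lam 1 = 2 - 2 * z := by
    rw [hz, ← mul_assoc, h4]
    ring
  have h := geom_sum_mul z (k+1)
  rw [he]
  linear_combination (-2 : PowerSeries ℝ) * h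

lemma z_const (lam : ℝ) :
    PowerSeries.constantCoeff (R := ℝ) (PowerSeries.C (R := ℝ) (-(1/2)) * (degExp lam 1 - 1)) = 0 := by
  simp [constCoeff_degExp]

lemma key_coeff (lam : ℝ) (n k : ℕ) :
    2 * (PowerSeries.coeff (R := ℝ) k) (∑ i ∈ range (2*n+2), PowerSeries.C (R := ℝ) ((-1)^i) * degExp lam (i:ℝ))
      = (PowerSeries.coeff (R := ℝ) k) ((1 - degExp lam (2*(n:ℝ)+2)) *
          ∑ i ∈ range (k+1), (PowerSeries.C (R := ℝ) (-(1/2)) * (degExp lam 1 - 1))^i) := by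
  set z := PowerSeries.C (R := ℝ) (-(1/2)) * (degExp lam 1 - 1) with hz
  set e := degExp lam 1 with he
  set P := ∑ i ∈ range (2*n+2), PowerSeries.C (R := ℝ) ((-1)^i) * degExp lam (i:ℝ) with hP
  set G := ∑ i ∈ range (k+1), z^i with hG
  set E2 := degExp lam (2*(n:ℝ)+2) with hE2
  have htel : (1 + e) * P = 1 - E2 := by
    have := telescope lam (2*n+1)
    have hc : ((2*n+1 : ℕ) : ℝ) + 1 = 2*(n:ℝ)+2 := by push_cast; ring
    have hsgn : ((-1:ℝ))^(2*n+1) = -1 := by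
      rw [pow_succ, pow_mul]; norm_num
    rw [hc, hsgn] at this
    have h22 : 2*n+1+1 = 2*n+2 := by omega
    rw [h22, ← he, ← hP, ← hE2] at this
    rw [this]
    simp
    ring
  have hgeom : (1 + e) * G = 2 - 2 * z^(k+1) := geom lam k
  have hD : (1 + e) * (2 * P - (1 - E2) * G) = 2 * (1 - E2) * z^(k+1) := by
    calc (1 + e) * (2 * P - (1 - E2) * G)
        = 2 * ((1+e)*P) - (1 - E2) * ((1+e)*G) := by ring
      _ = 2 * (1 - E2) - (1 - E2) * (2 - 2*z^(k+1)) := by rw [htel, hgeom]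
      _ = 2 * (1 - E2) * z^(k+1) := by ring
  have hXz : (PowerSeries.X : PowerSeries ℝ) ∣ z := by
    rw [PowerSeries.X_dvd_iff]
    exact z_const lam
  have hXpow : (PowerSeries.X : PowerSeries ℝ)^(k+1) ∣ (1 + e) * (2 * P - (1 - E2) * G) := by
    rw [hD]
    exact Dvd.dvd.mul_left (pow_dvd_pow_of_dvd hXz (k+1)) _
  have hunit : IsUnit (1 + e) := by
    rw [PowerSeries.isUnit_iff_constantCoeff]
    simp [he, constCoeff_degExp]
  have hdvd : (PowerSeries.X : PowerSeries ℝ)^(k+1) ∣ (2 * P - (1 - E2) * G) := by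
    exact (IsUnit.dvd_mul_left hunit).1 hXpow
  have hcoeff : (PowerSeries.coeff (R := ℝ) k) (2 * P - (1 - E2) * G) = 0 :=
    PowerSeries.X_pow_dvd_iff.1 hdvd k (by omega)
  have := hcoeff
  rw [map_sub] at this
  have h2P : (PowerSeries.coeff (R := ℝ) k) (2 * P) = 2 * (PowerSeries.coeff (R := ℝ) k) P := by
    rw [two_mul, map_add, two_mul]
  rw [h2P] at this
  linarith

lemma coeff_em1_pow (lam : ℝ) (j i : ℕ) :
    (PowerSeries.coeff (R := ℝ) j) ((degExp lam 1 - 1)^i)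
      = (i.factorial : ℝ) * S2 lam j i / (j.factorial : ℝ) := by
  unfold S2 egfCoeff
  rw [PowerSeries.coeff_C_mul]
  have h1 : (i.factorial : ℝ) ≠ 0 := Nat.cast_ne_zero.2 i.factorial_ne_zero
  have h2 : (j.factorial : ℝ) ≠ 0 := Nat.cast_ne_zero.2 j.factorial_ne_zero
  field_simp

lemma S2_lt (lam : ℝ) {j i : ℕ} (h : j < i) : S2 lam j i = 0 := by
  unfold S2 egfCoeff
  rw [PowerSeries.coeff_C_mul]
  have hdvd : (PowerSeries.X : PowerSeries ℝ)^i ∣ (degExp lam 1 - 1)^i := by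
    apply pow_dvd_pow_of_dvd
    rw [PowerSeries.X_dvd_iff]
    simp [constCoeff_degExp]
  rw [PowerSeries.X_pow_dvd_iff.1 hdvd j h]
  simp

lemma S2_zero_right (lam : ℝ) {j : ℕ} (h : 1 ≤ j) : S2 lam j 0 = 0 := by
  unfold S2 egfCoeff
  rw [PowerSeries.coeff_C_mul, pow_zero, PowerSeries.coeff_one]
  simp
  omega

lemma S2_zero_zero (lam : ℝ) : S2 lam 0 0 = 1 := by
  unfold S2 egfCoeff
  rw [PowerSeries.coeff_C_mul, pow_zero, PowerSeries.coeff_one]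
  simp

end Aux

/-- equation (44) of the paper: for `n ≥ 0`, `k ≥ 1`,
`T_{k,λ}(2n+1) = -2^{k-1}(n+1)_{k,λ/2}
 - ∑_{j=1}^{k-1} C(k,j)(n+1)_{k-j,λ/2} ∑_{i=1}^j (-1)^i i! 2^{k-j-i-1} S_{2,λ}(j,i)`. -/
theorem T_odd (lam : ℝ) (hlam : lam ≠ 0) (n k : ℕ) (hk : 1 ≤ k) :
    T lam k (2 * n + 1) =
      -(2 : ℝ) ^ (k - 1) * gff (lam / 2) ((n : ℝ) + 1) k -
        ∑ j ∈ Finset.Icc 1 (k - 1),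
          (k.choose j : ℝ) * gff (lam / 2) ((n : ℝ) + 1) (k - j) *
            ∑ i ∈ Finset.Icc 1 j,
              (-1 : ℝ) ^ i * (i.factorial : ℝ) *
                (2 : ℝ) ^ ((k : ℤ) - (j : ℤ) - (i : ℤ) - 1) * S2 lam j i := by
  have hfac : ∀ m : ℕ, ((m.factorial : ℝ)) ≠ 0 := fun m => Nat.cast_ne_zero.2 m.factorial_ne_zero
  have h2 : (2:ℝ) ≠ 0 := two_ne_zero
  set μ : ℕ → ℝ := fun m => gff (lam/2) ((n:ℝ)+1) m with hμ
  set s : ℕ → ℕ → ℝ := fun j i => S2 lam j i with hs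
  set w : ℕ → ℝ := fun j => ∑ i ∈ range (j+1), (-(1/2):ℝ)^i * i.factorial * s j i with hw
  set e : PowerSeries ℝ := degExp lam 1 with he
  set z : PowerSeries ℝ := PowerSeries.C (R := ℝ) (-(1/2)) * (e - 1) with hz
  set G : PowerSeries ℝ := ∑ i ∈ range (k+1), z^i with hG
  set E2 : PowerSeries ℝ := degExp lam (2*(n:ℝ)+2) with hE2
  set P : PowerSeries ℝ := ∑ i ∈ range (2*n+2), PowerSeries.C (R := ℝ) ((-1)^i) * degExp lam (i:ℝ)
    with hP
  -- Step 1 : T = k! * coeff_k P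
  have hT : T lam k (2*n+1) = (k.factorial : ℝ) * (PowerSeries.coeff (R := ℝ) k) P := by
    rw [hP, map_sum, Finset.mul_sum]
    unfold T
    have h22 : 2*n+1+1 = 2*n+2 := by omega
    rw [h22]
    refine Finset.sum_congr rfl fun i _ => ?_
    rw [PowerSeries.coeff_C_mul]
    show (-1:ℝ)^i * gff lam (i:ℝ) k = _ * ((-1:ℝ)^i * ((PowerSeries.coeff (R := ℝ) k) (degExp lam (i:ℝ))))
    unfold degExp
    rw [PowerSeries.coeff_mk]
    field_simp
  -- Step 2 : key identity
  have hkey : 2 * (PowerSeries.coeff (R := ℝ) k) P = (PowerSeries.coeff (R := ℝ) k) ((1 - E2) * G) :=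
    key_coeff lam n k
  -- Step 3 : split the product coefficient
  have hsplit : (PowerSeries.coeff (R := ℝ) k) ((1 - E2) * G)
      = (PowerSeries.coeff (R := ℝ) k) G - (PowerSeries.coeff (R := ℝ) k) (G * E2) := by
    have h : (1 - E2) * G = G - G * E2 := by ring
    rw [h, map_sub]
  have hGE : (PowerSeries.coeff (R := ℝ) k) (G * E2)
      = ∑ j ∈ range (k+1), (PowerSeries.coeff (R := ℝ) j) G * (PowerSeries.coeff (R := ℝ) (k-j)) E2 := by
    rw [PowerSeries.coeff_mul, Finset.Nat.sum_antidiagonal_eq_sum_range_succ_mk]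
  -- coefficients of E2
  have hE2c : ∀ m : ℕ, (PowerSeries.coeff (R := ℝ) m) E2 = 2^m * μ m / m.factorial := by
    intro m
    rw [hE2]
    have h' : (2*(n:ℝ)+2) = 2*((n:ℝ)+1) := by ring
    rw [h']
    unfold degExp
    rw [PowerSeries.coeff_mk, gff_two_mul]
  -- coefficients of G
  have hGc : ∀ j : ℕ, j ≤ k → (PowerSeries.coeff (R := ℝ) j) G = w j / j.factorial := by
    intro j hj
    rw [hG, map_sum]
    have hterm : ∀ i : ℕ, (PowerSeries.coeff (R := ℝ) j) (z^i)
        = (-(1/2):ℝ)^i * (i.factorial * s j i / j.factorial) := by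
      intro i
      rw [hz, mul_pow, ← map_pow, PowerSeries.coeff_C_mul, he, coeff_em1_pow]
    rw [Finset.sum_congr rfl fun i _ => hterm i]
    rw [← Finset.sum_subset (Finset.range_subset_range.2 (by omega : j+1 ≤ k+1))
      (fun i _ hi => by
        rw [Finset.mem_range, not_lt] at hi
        have : s j i = 0 := S2_lt lam (by omega)
        rw [this]; ring)]
    rw [hw, Finset.sum_div]
    refine Finset.sum_congr rfl fun i _ => ?_
    ring
  -- Step 4 : assemble in ℝ
  have hstep : T lam k (2*n+1)
      = w k / 2 - ∑ j ∈ range (k+1),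
          (k.factorial : ℝ)/2 * (w j / j.factorial * (2^(k-j) * μ (k-j) / (k-j).factorial)) := by
    rw [hT]
    have : (PowerSeries.coeff (R := ℝ) k) P = ((PowerSeries.coeff (R := ℝ) k) ((1 - E2) * G)) / 2 := by
      rw [← hkey]; ring
    have hsum : ∑ j ∈ range (k+1), (PowerSeries.coeff (R := ℝ) j) G * (PowerSeries.coeff (R := ℝ) (k-j)) E2
        = ∑ j ∈ range (k+1), w j / j.factorial * (2^(k-j) * μ (k-j) / (k-j).factorial) := by
      refine Finset.sum_congr rfl fun j hj => ?_
      rw [Finset.mem_range] at hj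
      rw [hGc j (by omega), hE2c (k-j)]
    rw [this, hsplit, hGE, hsum, hGc k le_rfl]
    have harith : ∀ S : ℝ, (k.factorial:ℝ) * ((w k / k.factorial - S)/2)
        = w k / 2 - (k.factorial:ℝ)/2 * S := by
      intro S
      field_simp
    rw [harith, Finset.mul_sum]
  rw [hstep]
  -- per-term normalization
  have hhalf : ∀ i : ℕ, (-(1/2):ℝ)^i = (-1)^i / 2^i := by
    intro i
    rw [show (-(1/2):ℝ) = (-1)/2 by norm_num, div_pow]
  have hkeyterm : ∀ j, j ≤ k →
      (k.factorial:ℝ)/2 * (w j / j.factorial * (2^(k-j) * μ (k-j) / (k-j).factorial))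
        = (k.choose j : ℝ) * μ (k-j) * (2:ℝ)^((k:ℤ)-(j:ℤ)-1) * w j := by
    intro j hj
    have hc : (k.choose j:ℝ) * j.factorial * (k-j).factorial = k.factorial := by
      exact_mod_cast congrArg (Nat.cast (R := ℝ)) (Nat.choose_mul_factorial_mul_factorial hj)
    have h1 : (k:ℤ)-(j:ℤ)-1 = ((k-j:ℕ):ℤ) - 1 := by
      have : ((k-j:ℕ):ℤ) = (k:ℤ) - j := by omega
      omega
    have hzp : (2:ℝ)^((k:ℤ)-(j:ℤ)-1) = 2^(k-j) / 2 := by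
      rw [h1, zpow_sub₀ h2, zpow_natCast, zpow_one]
    rw [hzp, ← hc]
    field_simp
  rw [Finset.sum_congr rfl (fun j hj => hkeyterm j (by
    rw [Finset.mem_range] at hj; omega))]
  set F : ℕ → ℝ := fun j => (k.choose j : ℝ) * μ (k-j) * (2:ℝ)^((k:ℤ)-(j:ℤ)-1) * w j with hF
  -- peel top (j = k)
  rw [Finset.sum_range_succ]
  have hFk : F k = w k / 2 := by
    rw [hF]
    simp only [Nat.choose_self, Nat.cast_one, Nat.sub_self]
    rw [show μ 0 = 1 from gff_zero _ _]
    rw [show (k:ℤ)-(k:ℤ)-1 = -1 by ring, zpow_neg_one]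
    ring
  -- peel bottom (j = 0)
  rw [Finset.range_eq_Ico, Finset.sum_eq_sum_Ico_succ_bot (by omega : 0 < k)]
  have hw0 : w 0 = 1 := by
    rw [hw]
    simp only []
    rw [Finset.sum_range_one]
    rw [show s 0 0 = 1 from S2_zero_zero lam]
    norm_num
  have hF0 : F 0 = (2:ℝ)^(k-1) * μ k := by
    rw [hF]
    simp only [Nat.choose_zero_right, Nat.cast_one, Nat.sub_zero, Nat.cast_zero]
    rw [hw0]
    have : (k:ℤ) - 0 - 1 = ((k-1:ℕ):ℤ) := by omega
    rw [this, zpow_natCast]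
    ring
  have hFk1 : F k = w k / 2 := hFk
  -- middle terms
  have hmid : ∑ j ∈ Finset.Ico 1 k, F j
      = ∑ j ∈ Finset.Icc 1 (k - 1),
          (k.choose j : ℝ) * μ (k - j) *
            ∑ i ∈ Finset.Icc 1 j,
              (-1 : ℝ) ^ i * (i.factorial : ℝ) *
                (2 : ℝ) ^ ((k : ℤ) - (j : ℤ) - (i : ℤ) - 1) * s j i := by
    rw [show Finset.Icc 1 (k-1) = Finset.Ico 1 k by
      rw [← Finset.Ico_add_one_right_eq_Icc]; congr 1; omega]
    refine Finset.sum_congr rfl fun j hj => ?_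
    rw [Finset.mem_Ico] at hj
    rw [hF]
    simp only []
    -- expand w j, dropping the i = 0 term
    have hwj : w j = ∑ i ∈ Finset.Icc 1 j, (-(1/2):ℝ)^i * i.factorial * s j i := by
      rw [hw]
      simp only []
      rw [Finset.range_eq_Ico, Finset.sum_eq_sum_Ico_succ_bot (by omega : 0 < j+1)]
      rw [show s j 0 = 0 from S2_zero_right lam (by omega), Finset.Ico_add_one_right_eq_Icc]
      norm_num
    rw [hwj, Finset.mul_sum, Finset.mul_sum]
    refine Finset.sum_congr rfl fun i hi => ?_
    rw [Finset.mem_Icc] at hi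
    have hsplitz : (2:ℝ)^((k:ℤ)-(j:ℤ)-(i:ℤ)-1) = (2:ℝ)^((k:ℤ)-(j:ℤ)-1) / 2^i := by
      rw [show (k:ℤ)-(j:ℤ)-(i:ℤ)-1 = ((k:ℤ)-(j:ℤ)-1) - (i:ℤ) by ring,
        zpow_sub₀ h2, zpow_natCast]
    rw [hsplitz, hhalf]
    ring
  rw [hmid]
  simp only [hF] at hF0 hFk
  simp only [hμ, hs] at *
  linarith [hF0, hFk]
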